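/- A regular semigroup S is L-unipotent if and only if for all idempotents e, f ∈ S one has eS ∩ fS = (e*f)S = (f*e)S, where xS denotes the set {x*s : s ∈ S}. -/

import Mathlib

/-! For idempotents `e, f` the inclusion `eS ∩ fS ⊆ (ef)S` always holds, and the reverse inclusion
amounts to `f(ef) = ef`. In an `L`-unipotent semigroup this follows by choosing an inverse `x` of
`ef` in the sandwich set `fSe`: then `x` and `ex` are `L`-related idempotents, so `x = ex`, which
forces `x(ef) = ef` and hence `f(ef) = ef`. Conversely, if `eS ∩ fS = (ef)S = (fe)S` and `e L f`,
then `ef = e` and `fe = f` give `eS = fS`, so `e` and `f` are also `R`-related, whence `e = f`. -/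

/-- The principal left ideal `Sa = {x*a : x ∈ S}` of an element of a semigroup. -/
def leftIdeal {S : Type*} [Semigroup S] (a : S) : Set S := {y | ∃ x : S, y = x * a}

/-- The principal right ideal `aS = {a*x : x ∈ S}` of an element of a semigroup. -/
def rightIdeal {S : Type*} [Semigroup S] (a : S) : Set S := {y | ∃ x : S, y = a * x}

/-- A semigroup is (von Neumann) regular if every element `a` has some `x` with `a*x*a = a`. -/
def IsRegularSemigroup (S : Type*) [Semigroup S] : Prop :=
  ∀ a : S, ∃ x : S, a * x * a = a

/-- A regular semigroup is `L`-unipotent if any two `L`-related idempotents are equal. -/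
def IsLUnipotent (S : Type*) [Semigroup S] : Prop :=
  IsRegularSemigroup S ∧
    ∀ e f : S, e * e = e → f * f = f → leftIdeal e = leftIdeal f → e = f

section

variable {S : Type*} [Semigroup S]

lemma mem_leftIdeal_self {e : S} (he : IsIdempotentElem e) : e ∈ leftIdeal e := ⟨e, he.symm⟩

lemma mem_rightIdeal_self {e : S} (he : IsIdempotentElem e) : e ∈ rightIdeal e := ⟨e, he.symm⟩

lemma mul_eq_of_mem_leftIdeal {e y : S} (he : IsIdempotentElem e) (hy : y ∈ leftIdeal e) :
    y * e = y := by
  obtain ⟨x, rfl⟩ := hy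
  rw [mul_assoc, he]

lemma mul_eq_of_mem_rightIdeal {e y : S} (he : IsIdempotentElem e) (hy : y ∈ rightIdeal e) :
    e * y = y := by
  obtain ⟨x, rfl⟩ := hy
  rw [← mul_assoc, he]

lemma leftIdeal_eq_of_mul_eq {a b : S} (hab : a * b = a) (hba : b * a = b) :
    leftIdeal a = leftIdeal b := by
  ext y
  constructor
  · rintro ⟨x, rfl⟩
    exact ⟨x * a, by rw [mul_assoc, hab]⟩
  · rintro ⟨x, rfl⟩
    exact ⟨x * b, by rw [mul_assoc, hba]⟩

lemma mul_eq_of_leftIdeal_eq {e f : S} (he : IsIdempotentElem e) (hf : IsIdempotentElem f)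
    (h : leftIdeal e = leftIdeal f) : e * f = e :=
  mul_eq_of_mem_leftIdeal hf (h ▸ mem_leftIdeal_self he)

lemma mul_eq_of_rightIdeal_eq {e f : S} (he : IsIdempotentElem e) (hf : IsIdempotentElem f)
    (h : rightIdeal e = rightIdeal f) : f * e = e :=
  mul_eq_of_mem_rightIdeal hf (h ▸ mem_rightIdeal_self he)

lemma rightIdeal_inter_eq_rightIdeal_mul {e f : S} (he : IsIdempotentElem e)
    (hf : IsIdempotentElem f) (hfef : f * (e * f) = e * f) :
    rightIdeal e ∩ rightIdeal f = rightIdeal (e * f) := by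
  ext y
  constructor
  · rintro ⟨hye, hyf⟩
    refine ⟨y, ?_⟩
    rw [mul_assoc, mul_eq_of_mem_rightIdeal hf hyf, mul_eq_of_mem_rightIdeal he hye]
  · rintro ⟨s, rfl⟩
    exact ⟨⟨f * s, by rw [mul_assoc]⟩, ⟨e * f * s, by rw [← mul_assoc, hfef]⟩⟩

/-- The witness is `f x₀ (ef) x₀ e`. -/
lemma exists_inverse_mul_mem_sandwich {e f x₀ : S} (he : IsIdempotentElem e)
    (hf : IsIdempotentElem f) (hx₀ : e * f * x₀ * (e * f) = e * f) :
    ∃ x, f * x = x ∧ x * e = x ∧ x * (e * f) * x = x ∧ e * f * x * (e * f) = e * f := by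
  have hee : ∀ z, e * (e * z) = e * z := fun z => by rw [← mul_assoc, he]
  have hff : ∀ z, f * (f * z) = f * z := fun z => by rw [← mul_assoc, hf]
  have hx₀' : e * (f * (x₀ * (e * f))) = e * f := by simpa only [mul_assoc] using hx₀
  have hx₀z : ∀ z, e * (f * (x₀ * (e * (f * z)))) = e * (f * z) := fun z => by
    simpa only [mul_assoc] using congrArg (· * z) hx₀
  refine ⟨f * x₀ * (e * f) * x₀ * e, ?_, ?_, ?_, ?_⟩ <;>
    simp only [mul_assoc, he.eq, hee, hff, hx₀', hx₀z]

lemma mul_mul_eq_of_isLUnipotent (hU : IsLUnipotent S) {e f : S}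
    (he : IsIdempotentElem e) (hf : IsIdempotentElem f) : f * (e * f) = e * f := by
  obtain ⟨x₀, hx₀⟩ := hU.1 (e * f)
  obtain ⟨x, hfx, hxe, hxpx, hpxp⟩ := exists_inverse_mul_mem_sandwich he hf hx₀
  have hxx : x * x = x := by
    calc x * x = x * e * (f * x) := by rw [hxe, hfx]
      _ = x := by rw [← mul_assoc, mul_assoc x e f, hxpx]
  have hexex : e * x * (e * x) = e * x := by
    rw [mul_assoc, ← mul_assoc x, hxe, hxx]
  have hx_eq : x = e * x := by
    refine hU.2 x (e * x) hxx hexex (leftIdeal_eq_of_mul_eq ?_ ?_)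
    · rw [← mul_assoc, hxe, hxx]
    · rw [mul_assoc, hxx]
  have hpx : e * f * x = x := by rw [mul_assoc, hfx, ← hx_eq]
  have hxp : x * (e * f) = e * f := by
    conv_rhs => rw [← hpxp, hpx]
  calc f * (e * f) = f * x * (e * f) := by rw [mul_assoc, hxp]
    _ = e * f := by rw [hfx, hxp]

lemma isLUnipotent_of_rightIdeal_inter (hS : IsRegularSemigroup S)
    (h : ∀ e f : S, e * e = e → f * f = f →
      rightIdeal e ∩ rightIdeal f = rightIdeal (e * f) ∧
      rightIdeal e ∩ rightIdeal f = rightIdeal (f * e)) :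
    IsLUnipotent S := by
  refine ⟨hS, fun e f he hf hL => ?_⟩
  have hef : e * f = e := mul_eq_of_leftIdeal_eq he hf hL
  have hfe : f * e = f := mul_eq_of_leftIdeal_eq hf he hL.symm
  obtain ⟨hEF, hFE⟩ := h e f he hf
  have hR : rightIdeal e = rightIdeal f := by rw [← hef, ← hEF, hFE, hfe]
  rw [← hef, mul_eq_of_rightIdeal_eq hf he hR.symm]

end

/-- A regular semigroup is `L`-unipotent iff `eS ∩ fS = (ef)S = (fe)S`
for all idempotents `e, f`. -/
theorem stmt6 {S : Type*} [Semigroup S] (hS : IsRegularSemigroup S) :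
    IsLUnipotent S ↔ ∀ e f : S, e * e = e → f * f = f →
      rightIdeal e ∩ rightIdeal f = rightIdeal (e * f) ∧
      rightIdeal e ∩ rightIdeal f = rightIdeal (f * e) := by
  refine ⟨fun hU e f he hf => ⟨?_, ?_⟩, isLUnipotent_of_rightIdeal_inter hS⟩
  · exact rightIdeal_inter_eq_rightIdeal_mul he hf (mul_mul_eq_of_isLUnipotent hU he hf)
  · rw [Set.inter_comm]
    exact rightIdeal_inter_eq_rightIdeal_mul hf he (mul_mul_eq_of_isLUnipotent hU hf he)
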